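/- Let N > 0 and a ≠ 0 be real. The multiple Hermite polynomials satisfy, for all integers k₁, k₂ ≥ 1 and all z, the recurrence P_{k₁+1,k₂}(z) = (z − a)·P_{k₁,k₂}(z) − (k₁/N)·P_{k₁−1,k₂}(z) − (k₂/N)·P_{k₁,k₂−1}(z). -/

import Mathlib

open MeasureTheory Filter Topology Polynomial Asymptotics

noncomputable section

/-- first weight -/
def w1 (N a x : ℝ) : ℝ := Real.exp (-N * (x ^ 2 / 2 - a * x))

/-- second weight -/
def w2 (N a x : ℝ) : ℝ := Real.exp (-N * (x ^ 2 / 2 + a * x))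

/-- `P` is the multiple Hermite polynomial with indices `k₁, k₂`. -/
def IsMHP (N a : ℝ) (k₁ k₂ : ℕ) (P : Polynomial ℝ) : Prop :=
  P.Monic ∧ P.natDegree = k₁ + k₂ ∧
  (∀ j < k₁, ∫ x : ℝ, P.eval x * x ^ j * w1 N a x = 0) ∧
  (∀ j < k₂, ∫ x : ℝ, P.eval x * x ^ j * w2 N a x = 0)

/-- the normalization constant `h⁽¹⁾` -/
def hc1 (N a : ℝ) (k₁ : ℕ) (P : Polynomial ℝ) : ℝ :=
  ∫ x : ℝ, P.eval x * x ^ k₁ * w1 N a x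

/-- the normalization constant `h⁽²⁾` -/
def hc2 (N a : ℝ) (k₂ : ℕ) (P : Polynomial ℝ) : ℝ :=
  ∫ x : ℝ, P.eval x * x ^ k₂ * w2 N a x

/-!
For `φ_c(x) = cx - Nx²/2` the raising operator `R_c p = (X - c/N) p - p'/N` satisfies
`(R_c p) e^{φ_c} = -(p e^{φ_c})'/N`, so integrating by parts against `e^{φ_b}` moves `R_c` onto the
test polynomial as `(d/dx + (b - c))/N`. Hence the monic polynomial `R_{Na}^{k₁} R_{-Na}^{k₂} 1`
(the two operators commute) satisfies the orthogonality conditions of `P_{k₁,k₂}`, and its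
`k₁`-th moment against `w1` is a nonzero multiple of `(2a)^{k₂}`; peeling off such polynomials, an
induction on `k₁ + k₂` shows that the conditions determine `P_{k₁,k₂}`. The recurrence is then
`P_{k₁+1,k₂} = R_{Na} P_{k₁,k₂}` together with `[d/dx, R_c] = 1`, which gives
`P'_{k₁,k₂} = k₁ P_{k₁-1,k₂} + k₂ P_{k₁,k₂-1}`.
-/

lemma integrable_eval_mul_exp_neg_mul_sq {b : ℝ} (hb : 0 < b) (p : ℝ[X]) :
    Integrable fun x : ℝ => p.eval x * Real.exp (-b * x ^ 2) := by
  induction p using Polynomial.induction_on' with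
  | add p q hp hq =>
    simp only [eval_add, add_mul]
    exact hp.add hq
  | monomial n r =>
    have h := (integrable_rpow_mul_exp_neg_mul_sq hb (s := n)
      (by linarith [n.cast_nonneg (α := ℝ)])).const_mul r
    simpa only [eval_monomial, Real.rpow_natCast, mul_assoc] using h

/-- `w1 N a` and `w2 N a` are the weights `e^{cx - Nx²/2}` with `c = N a` and `c = -N a`. -/
def gaussMoment (N c : ℝ) (p : ℝ[X]) : ℝ :=
  ∫ x, p.eval x * Real.exp (c * x - N * x ^ 2 / 2)

def IsOrthogonalBelow (N c : ℝ) (n : ℕ) (p : ℝ[X]) : Prop :=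
  ∀ l < n, gaussMoment N c (X ^ l * p) = 0

def raising (N c : ℝ) : Module.End ℝ ℝ[X] :=
  LinearMap.mulLeft ℝ (X - C (c / N)) - N⁻¹ • derivative

def multipleHermite (N c d : ℝ) (i j : ℕ) : ℝ[X] :=
  (raising N c ^ i * raising N d ^ j) 1

lemma raising_apply {N : ℝ} (c : ℝ) (p : ℝ[X]) :
    raising N c p = (X - C (c / N)) * p - C N⁻¹ * derivative p := by
  simp [raising, smul_eq_C_mul]

lemma commute_raising (N c d : ℝ) : Commute (raising N c) (raising N d) := by
  refine LinearMap.ext fun p => ?_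
  simp only [Module.End.mul_apply, raising_apply, derivative_mul, derivative_X, derivative_C,
    map_sub]
  ring

lemma derivative_mul_raising (N c : ℝ) :
    (derivative : Module.End ℝ ℝ[X]) * raising N c = raising N c * derivative + 1 := by
  refine LinearMap.ext fun p => ?_
  simp only [LinearMap.add_apply, Module.End.mul_apply, Module.End.one_apply, raising_apply,
    derivative_mul, derivative_X, derivative_C, map_sub]
  ring

lemma mul_raising {N : ℝ} (b c : ℝ) (p q : ℝ[X]) :
    p * raising N c q = raising N b (p * q) + C N⁻¹ * ((derivative p + C (b - c) * p) * q) := by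
  simp only [raising_apply, derivative_mul, div_eq_mul_inv, map_mul, map_sub]
  ring

lemma degree_C_mul_derivative_lt (N c : ℝ) {q : ℝ[X]} (hq : q ≠ 0) :
    (C N⁻¹ * derivative q).degree < ((X - C (c / N)) * q).degree :=
  calc (C N⁻¹ * derivative q).degree ≤ (derivative q).degree :=
        (degree_mul_le_of_le degree_C_le le_rfl).trans (by simp)
    _ < q.degree := degree_derivative_lt hq
    _ ≤ ((X - C (c / N)) * q).degree := by
      rw [mul_comm]
      exact degree_le_mul_left q (X_sub_C_ne_zero _)

lemma Polynomial.Monic.raising_pow {q : ℝ[X]} (hq : q.Monic) (N c : ℝ) (n : ℕ) :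
    ((raising N c ^ n) q).Monic ∧ ((raising N c ^ n) q).natDegree = q.natDegree + n := by
  induction n with
  | zero => simpa using hq
  | succ n ih =>
    obtain ⟨hm, hdeg⟩ := ih
    have hlt := degree_C_mul_derivative_lt N c hm.ne_zero
    rw [pow_succ', Module.End.mul_apply, raising_apply]
    refine ⟨((monic_X_sub_C _).mul hm).sub_of_left hlt, ?_⟩
    rw [natDegree_eq_of_degree_eq (degree_sub_eq_left_of_degree_lt hlt),
      (monic_X_sub_C _).natDegree_mul hm, natDegree_X_sub_C, hdeg]
    ring

lemma mul_pow_eq_of_mul_eq_mul_add_one {A : Type*} [Ring A] {d r : A} (h : d * r = r * d + 1)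
    (n : ℕ) : d * r ^ n = r ^ n * d + n * r ^ (n - 1) := by
  induction n with
  | zero => simp
  | succ n ih =>
    rcases n with _ | n
    · simp [h]
    · rw [pow_succ, ← mul_assoc, ih, add_mul, mul_assoc, h]
      simp only [Nat.add_sub_cancel, Nat.cast_add, Nat.cast_one, ← pow_succ]
      noncomm_ring

lemma degree_sub_C_coeff_mul_lt {R : Type*} [Ring R] {D B : R[X]} {n : ℕ} (hB : B.Monic)
    (hBn : B.natDegree = n) (hD : D.degree < ↑(n + 1)) :
    (D - C (D.coeff n) * B).degree < n := by
  rw [degree_lt_iff_coeff_zero] at hD ⊢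
  intro m hm
  rcases hm.eq_or_lt with rfl | hm
  · rw [coeff_sub, coeff_C_mul, ← hBn, hB.coeff_natDegree, mul_one, sub_self]
  · simp [hD m hm, coeff_eq_zero_of_natDegree_lt (hBn ▸ hm : B.natDegree < m)]

section multipleHermite

variable {N c d : ℝ}

lemma multipleHermite_comm (i j : ℕ) :
    multipleHermite N c d i j = multipleHermite N d c j i := by
  rw [multipleHermite, multipleHermite, ((commute_raising N c d).pow_pow i j).eq]

lemma monic_multipleHermite (i j : ℕ) : (multipleHermite N c d i j).Monic :=
  ((monic_one.raising_pow N d j).1.raising_pow N c i).1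

lemma natDegree_multipleHermite (i j : ℕ) : (multipleHermite N c d i j).natDegree = i + j := by
  rw [multipleHermite, Module.End.mul_apply, ((monic_one.raising_pow N d j).1.raising_pow N c i).2,
    (monic_one.raising_pow N d j).2, natDegree_one]
  ring

lemma derivative_multipleHermite (i j : ℕ) :
    derivative (multipleHermite N c d i j)
      = C (i : ℝ) * multipleHermite N c d (i - 1) j
        + C (j : ℝ) * multipleHermite N c d i (j - 1) := by
  have hc := mul_pow_eq_of_mul_eq_mul_add_one (derivative_mul_raising N c) i
  have hd := mul_pow_eq_of_mul_eq_mul_add_one (derivative_mul_raising N d) j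
  have key : (derivative : Module.End ℝ ℝ[X]) * (raising N c ^ i * raising N d ^ j)
      = raising N c ^ i * raising N d ^ j * derivative + (i : Module.End ℝ ℝ[X]) *
        (raising N c ^ (i - 1) * raising N d ^ j) + raising N c ^ i * ((j : Module.End ℝ ℝ[X]) *
        raising N d ^ (j - 1)) := by
    rw [← mul_assoc, hc, add_mul, mul_assoc, hd]
    noncomm_ring
  have h := LinearMap.congr_fun key 1
  simp only [Module.End.mul_apply, LinearMap.add_apply, Module.End.natCast_apply, map_nsmul,
    derivative_one, map_zero, zero_add] at h
  simpa only [multipleHermite, Module.End.mul_apply, nsmul_eq_mul, C_eq_natCast] using h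

lemma multipleHermite_succ_left (i j : ℕ) :
    multipleHermite N c d (i + 1) j = (X - C (c / N)) * multipleHermite N c d i j
      - C ((i : ℝ) / N) * multipleHermite N c d (i - 1) j
      - C ((j : ℝ) / N) * multipleHermite N c d i (j - 1) := by
  rw [multipleHermite, pow_succ', mul_assoc, Module.End.mul_apply, ← multipleHermite,
    raising_apply, derivative_multipleHermite]
  simp only [div_eq_mul_inv, map_mul]
  ring

end multipleHermite

section gaussMoment

variable {N : ℝ} (hN : 0 < N)
include hN

lemma integrable_eval_mul_exp_quadratic (c : ℝ) (p : ℝ[X]) :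
    Integrable fun x : ℝ => p.eval x * Real.exp (c * x - N * x ^ 2 / 2) := by
  have h := ((integrable_eval_mul_exp_neg_mul_sq (half_pos hN)
    (p.comp (X + C (c / N)))).comp_sub_right (c / N)).const_mul (Real.exp (c ^ 2 / (2 * N)))
  refine h.congr (Eventually.of_forall fun x => ?_)
  simp only [eval_comp, eval_add, eval_X, eval_C, sub_add_cancel]
  rw [mul_left_comm, ← Real.exp_add]
  congr 2
  field_simp
  ring

lemma gaussMoment_add (c : ℝ) (p q : ℝ[X]) :
    gaussMoment N c (p + q) = gaussMoment N c p + gaussMoment N c q := by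
  simp only [gaussMoment, eval_add, add_mul]
  exact integral_add (integrable_eval_mul_exp_quadratic hN c p)
    (integrable_eval_mul_exp_quadratic hN c q)

lemma gaussMoment_sub (c : ℝ) (p q : ℝ[X]) :
    gaussMoment N c (p - q) = gaussMoment N c p - gaussMoment N c q := by
  simp only [gaussMoment, eval_sub, sub_mul]
  exact integral_sub (integrable_eval_mul_exp_quadratic hN c p)
    (integrable_eval_mul_exp_quadratic hN c q)

omit hN in
lemma gaussMoment_C_mul (c r : ℝ) (p : ℝ[X]) :
    gaussMoment N c (C r * p) = r * gaussMoment N c p := by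
  simp only [gaussMoment, eval_mul, eval_C, mul_assoc, integral_const_mul]

lemma gaussMoment_one_pos (c : ℝ) : 0 < gaussMoment N c 1 := by
  simp only [gaussMoment, eval_one, one_mul]
  exact integral_exp_pos (by simpa using integrable_eval_mul_exp_quadratic hN c 1)

lemma hasDerivAt_eval_mul_exp_quadratic (c : ℝ) (p : ℝ[X]) (x : ℝ) :
    HasDerivAt (fun x => p.eval x * Real.exp (c * x - N * x ^ 2 / 2))
      ((C (-N) * raising N c p).eval x * Real.exp (c * x - N * x ^ 2 / 2)) x := by
  have hφ : HasDerivAt (fun x => c * x - N * x ^ 2 / 2) (c - N * x) x :=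
    (((hasDerivAt_id x).const_mul c).sub
      (((hasDerivAt_pow 2 x).const_mul N).div_const 2)).congr_deriv
        (by simp only [mul_one, Nat.cast_ofNat, Nat.add_one_sub_one, pow_one, sub_right_inj]; ring)
  refine ((p.hasDerivAt x).mul hφ.exp).congr_deriv ?_
  simp only [raising_apply, eval_mul, eval_sub, eval_C, eval_X]
  field_simp
  ring

lemma gaussMoment_raising_self (c : ℝ) (p : ℝ[X]) : gaussMoment N c (raising N c p) = 0 := by
  have h := integral_eq_zero_of_hasDerivAt_of_integrable
    (hasDerivAt_eval_mul_exp_quadratic hN c p) (integrable_eval_mul_exp_quadratic hN c _)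
    (integrable_eval_mul_exp_quadratic hN c p)
  rw [← gaussMoment, gaussMoment_C_mul] at h
  simpa [hN.ne'] using h

lemma gaussMoment_mul_raising (b c : ℝ) (p q : ℝ[X]) :
    gaussMoment N b (p * raising N c q)
      = N⁻¹ * gaussMoment N b ((derivative p + C (b - c) * p) * q) := by
  rw [mul_raising b, gaussMoment_add hN, gaussMoment_raising_self hN, gaussMoment_C_mul, zero_add]

lemma gaussMoment_mul_raising_pow (c : ℝ) (n : ℕ) (p q : ℝ[X]) :
    gaussMoment N c (p * (raising N c ^ n) q)
      = N⁻¹ ^ n * gaussMoment N c (derivative^[n] p * q) := by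
  induction n generalizing p with
  | zero => simp
  | succ n ih =>
    rw [pow_succ', Module.End.mul_apply, gaussMoment_mul_raising hN, sub_self, map_zero, zero_mul,
      add_zero, ih, Function.iterate_succ_apply, pow_succ']
    ring

lemma gaussMoment_raising_pow (b c : ℝ) (n : ℕ) (q : ℝ[X]) :
    gaussMoment N b ((raising N c ^ n) q) = (N⁻¹ * (b - c)) ^ n * gaussMoment N b q := by
  induction n with
  | zero => simp
  | succ n ih =>
    rw [pow_succ', Module.End.mul_apply, ← one_mul (raising N c _), gaussMoment_mul_raising hN,
      derivative_one, mul_one, zero_add, gaussMoment_C_mul, ih, pow_succ']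
    ring

end gaussMoment

section orthogonality

variable {N c d : ℝ} {n : ℕ} {p q : ℝ[X]}

lemma IsOrthogonalBelow.sub (hN : 0 < N) (hp : IsOrthogonalBelow N c n p)
    (hq : IsOrthogonalBelow N c n q) : IsOrthogonalBelow N c n (p - q) := fun l hl => by
  rw [mul_sub, gaussMoment_sub hN, hp l hl, hq l hl, sub_zero]

lemma IsOrthogonalBelow.C_mul (hp : IsOrthogonalBelow N c n p) (t : ℝ) :
    IsOrthogonalBelow N c n (C t * p) := fun l hl => by
  rw [mul_left_comm, gaussMoment_C_mul, hp l hl, mul_zero]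

lemma IsOrthogonalBelow.mono {m : ℕ} (hp : IsOrthogonalBelow N c m p) (hnm : n ≤ m) :
    IsOrthogonalBelow N c n p := fun l hl => hp l (hl.trans_le hnm)

lemma isOrthogonalBelow_multipleHermite_left (hN : 0 < N) (i j : ℕ) :
    IsOrthogonalBelow N c i (multipleHermite N c d i j) := fun l hl => by
  rw [multipleHermite, Module.End.mul_apply, gaussMoment_mul_raising_pow hN,
    iterate_derivative_eq_zero (by simpa using hl), zero_mul]
  simp [gaussMoment]

lemma isOrthogonalBelow_multipleHermite_right (hN : 0 < N) (i j : ℕ) :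
    IsOrthogonalBelow N d j (multipleHermite N c d i j) :=
  multipleHermite_comm (c := c) i j ▸ isOrthogonalBelow_multipleHermite_left hN j i

lemma gaussMoment_X_pow_mul_multipleHermite_ne_zero (hN : 0 < N) (hcd : c ≠ d) (i j : ℕ) :
    gaussMoment N c (X ^ i * multipleHermite N c d i j) ≠ 0 := by
  rw [multipleHermite, Module.End.mul_apply, gaussMoment_mul_raising_pow hN,
    iterate_derivative_X_pow_eq_C_mul, Nat.sub_self, pow_zero, mul_one, gaussMoment_C_mul,
    gaussMoment_raising_pow hN]
  simp [hN.ne', sub_eq_zero, hcd, (gaussMoment_one_pos hN c).ne', Nat.descFactorial_self,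
    Nat.factorial_ne_zero]

theorem eq_zero_of_isOrthogonalBelow (hN : 0 < N) (hcd : c ≠ d) {n₁ n₂ : ℕ} {D : ℝ[X]}
    (hD : D.degree < ↑(n₁ + n₂)) (h₁ : IsOrthogonalBelow N c n₁ D)
    (h₂ : IsOrthogonalBelow N d n₂ D) : D = 0 := by
  induction hn : n₁ + n₂ generalizing c d n₁ n₂ D with
  | zero => simpa [hn] using hD
  | succ n ih =>
    wlog hn₁ : 0 < n₁ generalizing c d n₁ n₂
    · exact this hcd.symm (by rwa [add_comm]) h₂ h₁ (by omega) (by omega)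
    obtain ⟨i, rfl⟩ : ∃ i, n₁ = i + 1 := ⟨n₁ - 1, by omega⟩
    set B := multipleHermite N c d i n₂
    set t := D.coeff (i + n₂)
    have hlt : (D - C t * B).degree < ↑(i + n₂) :=
      degree_sub_C_coeff_mul_lt (monic_multipleHermite i n₂) (natDegree_multipleHermite i n₂)
        (by rwa [← add_right_comm])
    have hDB : D - C t * B = 0 :=
      ih hcd hlt
        ((h₁.mono i.le_succ).sub hN ((isOrthogonalBelow_multipleHermite_left hN i n₂).C_mul t))
        (h₂.sub hN ((isOrthogonalBelow_multipleHermite_right hN i n₂).C_mul t)) (by omega)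
    rw [sub_eq_zero] at hDB
    have ht : t = 0 := by
      have h := h₁ i i.lt_succ_self
      rw [hDB, mul_left_comm, gaussMoment_C_mul] at h
      exact (mul_eq_zero.1 h).resolve_right
        (gaussMoment_X_pow_mul_multipleHermite_ne_zero hN hcd i n₂)
    rw [hDB, ht, C_0, zero_mul]

end orthogonality

lemma integral_mul_w1 (N a : ℝ) (P : ℝ[X]) (j : ℕ) :
    ∫ x, P.eval x * x ^ j * w1 N a x = gaussMoment N (N * a) (X ^ j * P) := by
  simp only [gaussMoment, w1, eval_mul, eval_X_pow]
  congr 1 with x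
  ring_nf

lemma integral_mul_w2 (N a : ℝ) (P : ℝ[X]) (j : ℕ) :
    ∫ x, P.eval x * x ^ j * w2 N a x = gaussMoment N (-(N * a)) (X ^ j * P) := by
  simp only [gaussMoment, w2, eval_mul, eval_X_pow]
  congr 1 with x
  ring_nf

theorem IsMHP.eq_multipleHermite {N a : ℝ} (hN : 0 < N) (ha : a ≠ 0) {k₁ k₂ : ℕ} {P : ℝ[X]}
    (hP : IsMHP N a k₁ k₂ P) : P = multipleHermite N (N * a) (-(N * a)) k₁ k₂ := by
  obtain ⟨hmonic, hdeg, h₁, h₂⟩ := hP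
  have hcd : N * a ≠ -(N * a) := fun h => mul_ne_zero hN.ne' ha (by linarith)
  have hP₁ : IsOrthogonalBelow N (N * a) k₁ P := fun j hj => integral_mul_w1 N a P j ▸ h₁ j hj
  have hP₂ : IsOrthogonalBelow N (-(N * a)) k₂ P := fun j hj => integral_mul_w2 N a P j ▸ h₂ j hj
  set B := multipleHermite N (N * a) (-(N * a)) k₁ k₂
  have hlt : (P - B).degree < ↑(k₁ + k₂) := by
    have h := degree_sub_C_coeff_mul_lt (D := P) (B := B) (monic_multipleHermite k₁ k₂)
      (natDegree_multipleHermite k₁ k₂)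
      (by rw [degree_eq_natDegree hmonic.ne_zero, hdeg]; exact_mod_cast (k₁ + k₂).lt_succ_self)
    rwa [← hdeg, hmonic.coeff_natDegree, C_1, one_mul, hdeg] at h
  exact sub_eq_zero.1 (eq_zero_of_isOrthogonalBelow hN hcd hlt
    (hP₁.sub hN (isOrthogonalBelow_multipleHermite_left hN k₁ k₂))
    (hP₂.sub hN (isOrthogonalBelow_multipleHermite_right hN k₁ k₂)))

theorem statement13_general (N a : ℝ) (hN : 0 < N) (ha : a ≠ 0)
    (P : ℕ → ℕ → Polynomial ℝ) (hP : ∀ k₁ k₂ : ℕ, IsMHP N a k₁ k₂ (P k₁ k₂))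
    (k₁ k₂ : ℕ) :
    ∀ z : ℝ, (P (k₁ + 1) k₂).eval z =
      (z - a) * (P k₁ k₂).eval z - (k₁ : ℝ) / N * (P (k₁ - 1) k₂).eval z -
        (k₂ : ℝ) / N * (P k₁ (k₂ - 1)).eval z := by
  intro z
  simp only [fun i j => (hP i j).eq_multipleHermite hN ha, multipleHermite_succ_left,
    mul_div_cancel_left₀ a hN.ne', eval_sub, eval_mul, eval_X, eval_C]

/-- Recurrence in the first index for multiple Hermite polynomials. -/
theorem statement13 (N a : ℝ) (hN : 0 < N) (ha : a ≠ 0)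
    (P : ℕ → ℕ → Polynomial ℝ) (hP : ∀ k₁ k₂ : ℕ, IsMHP N a k₁ k₂ (P k₁ k₂))
    (k₁ k₂ : ℕ) (hk₁ : 1 ≤ k₁) (hk₂ : 1 ≤ k₂) :
    ∀ z : ℝ, (P (k₁ + 1) k₂).eval z =
      (z - a) * (P k₁ k₂).eval z - (k₁ : ℝ) / N * (P (k₁ - 1) k₂).eval z -
        (k₂ : ℝ) / N * (P k₁ (k₂ - 1)).eval z :=
  statement13_general N a hN ha P hP k₁ k₂

end
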